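/- Let X be a locally complete real locally convex space, and let (x_n) be a bounded sequence in X which is an l¹-sequence, witnessed by a continuous seminorm ρ on X and δ > 0 (i.e. δ·Σ_{i=1}^n |c_i| ≤ ρ(Σ_{i=1}^n c_i x_i) for all n and reals c_i). Then there exists a continuous linear topological embedding φ : l¹ → X such that φ(e_n) = x_n for every n, and moreover ρ(φ(α)) ≥ δ·‖α‖₁ for every α ∈ l¹. -/

import Mathlib

/-!
Let `S` be the closed absolutely convex hull of `{xₙ}`; it is a bounded disk, so by local
completeness every series `∑ αₙ xₙ` with `α ∈ l¹`, being absolutely convergent for the gauge of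
`S`, converges in `X`, with sum in `r • S` for every `r > ‖α‖`. Boundedness of `S` turns this into
continuity, and the `l¹`-estimate passes to the limit to give `δ‖α‖ ≤ ρ(φ α)`, whence `φ` is an
embedding. Since `X` need not be Hausdorff, limits are not unique: `φ` is a linear selection of
limits, chosen through a Hamel basis extending `(eₙ)` so that `φ eₙ = xₙ`.
-/

open Filter Topology

/-- The Banach space `l¹` of absolutely summable real sequences. -/
noncomputable abbrev ellOne : Type := ↥(lp (fun _ : ℕ => ℝ) 1)

/-- The standard unit vector basis of `l¹`. -/
noncomputable def stdBasis (n : ℕ) : ellOne := lp.single 1 n (1 : ℝ)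

/-- A real locally convex space is locally complete if for every closed bounded disk
`S`, the span of `S` is (sequentially) complete with respect to the gauge of `S`. -/
def LocallyComplete (X : Type*) [AddCommGroup X] [Module ℝ X] [TopologicalSpace X] :
    Prop :=
  ∀ S : Set X, IsClosed S → Bornology.IsVonNBounded ℝ S → Balanced ℝ S → Convex ℝ S →
    ∀ x : ℕ → X, (∀ n, x n ∈ Submodule.span ℝ S) →
      (∀ ε : ℝ, 0 < ε → ∃ N : ℕ, ∀ m ≥ N, ∀ n ≥ N, gauge S (x m - x n) < ε) →
      ∃ l ∈ Submodule.span ℝ S,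
        Tendsto (fun n => gauge S (x n - l)) atTop (𝓝 0)

open Set Pointwise Bornology

section Disk

variable {X : Type*} [AddCommGroup X] [Module ℝ X] {S : Set X}

theorem Balanced.smul_mem_abs_smul (hS : Balanced ℝ S) (c : ℝ) {z : X} (hz : z ∈ S) :
    c • z ∈ |c| • S :=
  hS.smul_congr (a := c) (b := |c|) (by simp) ▸ smul_mem_smul_set hz

theorem sum_smul_mem_sum_abs_smul (hb : Balanced ℝ S) (hc : Convex ℝ S) (h0 : (0 : X) ∈ S)
    {ι : Type*} (t : Finset ι) (c : ι → ℝ) {z : ι → X} (hz : ∀ i ∈ t, z i ∈ S) :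
    ∑ i ∈ t, c i • z i ∈ (∑ i ∈ t, |c i|) • S := by
  classical
  induction t using Finset.induction_on with
  | empty => simpa using zero_mem_smul_set h0
  | insert a t ha ih =>
    rw [Finset.sum_insert ha, Finset.sum_insert ha,
      hc.add_smul (abs_nonneg _) (Finset.sum_nonneg fun i _ => abs_nonneg _)]
    exact add_mem_add (hb.smul_mem_abs_smul _ (hz a (Finset.mem_insert_self a t)))
      (ih fun i hi => hz i (Finset.mem_insert_of_mem hi))

theorem exists_pos_mem_smul_of_mem_span (hb : Balanced ℝ S) (hc : Convex ℝ S)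
    (h0 : (0 : X) ∈ S) {z : X} (hz : z ∈ Submodule.span ℝ S) : ∃ r : ℝ, 0 < r ∧ z ∈ r • S := by
  obtain ⟨n, c, s, rfl⟩ := Submodule.mem_span_set'.1 hz
  have hsum := sum_smul_mem_sum_abs_smul hb hc h0 Finset.univ c fun i _ => (s i).2
  have hnonneg : 0 ≤ ∑ i, |c i| := Finset.sum_nonneg fun i _ => abs_nonneg _
  refine ⟨∑ i, |c i| + 1, by positivity, hb.smul_mono ?_ hsum⟩
  rw [Real.norm_of_nonneg hnonneg, Real.norm_of_nonneg (by positivity)]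
  linarith

-- `hz` matters: off `span S` the gauge takes the junk value `sInf ∅ = 0`.
theorem mem_smul_of_gauge_lt (hb : Balanced ℝ S) (hc : Convex ℝ S) (h0 : (0 : X) ∈ S) {z : X}
    (hz : z ∈ Submodule.span ℝ S) {ε : ℝ} (h : gauge S z < ε) : z ∈ ε • S := by
  obtain ⟨r, hr, hzr⟩ := exists_pos_mem_smul_of_mem_span hb hc h0 hz
  obtain ⟨r', ⟨hr', hzr'⟩, hr'ε⟩ :=
    exists_lt_of_csInf_lt (s := {r : ℝ | 0 < r ∧ z ∈ r • S}) ⟨r, hr, hzr⟩ h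
  refine hb.smul_mono ?_ hzr'
  simp only [Real.norm_eq_abs, abs_of_pos hr', abs_of_pos (hr'.trans hr'ε)]
  exact hr'ε.le

end Disk

section Bounded

variable {X : Type*} [AddCommGroup X] [Module ℝ X] [TopologicalSpace X] {S : Set X}

theorem Bornology.IsVonNBounded.exists_pos_smul_subset (hS : IsVonNBounded ℝ S) {U : Set X}
    (hU : U ∈ 𝓝 0) : ∃ ε : ℝ, 0 < ε ∧ ε • S ⊆ U := by
  obtain ⟨ε, hε, h⟩ :=
    Metric.eventually_nhds_iff.1 (tendsto_smallSets_iff.1 hS.tendsto_smallSets_nhds U hU)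
  exact ⟨ε / 2, by positivity, h (by rw [Real.dist_0_eq_abs, abs_of_pos (by positivity)]; linarith)⟩

theorem tendsto_nhds_zero_of_tendsto_gauge (hS : IsVonNBounded ℝ S) (hb : Balanced ℝ S)
    (hc : Convex ℝ S) (h0 : (0 : X) ∈ S) {ι : Type*} {l : Filter ι} {w : ι → X}
    (hw : ∀ i, w i ∈ Submodule.span ℝ S) (h : Tendsto (fun i => gauge S (w i)) l (𝓝 0)) :
    Tendsto w l (𝓝 0) := by
  intro U hU
  obtain ⟨ε, hε, hεU⟩ := hS.exists_pos_smul_subset hU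
  rw [mem_map]
  filter_upwards [h.eventually (gt_mem_nhds hε)] with i hi
  exact hεU (mem_smul_of_gauge_lt hb hc h0 (hw i) hi)

end Bounded

section ClosedAbsConvexHull

variable {𝕜 X : Type*} [NontriviallyNormedField 𝕜] [PartialOrder 𝕜] [ZeroLEOneClass 𝕜]
  [AddCommGroup X] [Module 𝕜 X] [TopologicalSpace X] [IsTopologicalAddGroup X]
  [ContinuousSMul 𝕜 X] [LocallyConvexSpace 𝕜 X]

theorem Bornology.IsVonNBounded.closedAbsConvexHull {s : Set X} (hs : IsVonNBounded 𝕜 s) :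
    IsVonNBounded 𝕜 (closedAbsConvexHull 𝕜 s) := by
  intro U hU
  obtain ⟨W, ⟨hW0, hWcl, hWabs⟩, hWU⟩ := (nhds_hasBasis_absConvex_closed 𝕜 X).mem_iff.1 hU
  filter_upwards [hs hW0, eventually_ne_cobounded 0] with a ha ha0
  exact (closedAbsConvexHull_min ha ⟨hWabs.1.smul a, hWabs.2.smul a⟩
    (hWcl.smul_of_ne_zero ha0)).trans (smul_set_mono hWU)

end ClosedAbsConvexHull

theorem LocallyComplete.exists_tendsto_sum_smul {X : Type*} [AddCommGroup X] [Module ℝ X]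
    [TopologicalSpace X] [IsTopologicalAddGroup X] (hX : LocallyComplete X) {S : Set X}
    (hcl : IsClosed S) (hS : IsVonNBounded ℝ S) (hb : Balanced ℝ S) (hc : Convex ℝ S)
    {z : ℕ → X} (hz : ∀ i, z i ∈ S) {c : ℕ → ℝ} (hsum : Summable fun i => |c i|) :
    ∃ l, Tendsto (fun n => ∑ i ∈ Finset.range n, c i • z i) atTop (𝓝 l) := by
  set t := fun n => ∑ i ∈ Finset.range n, c i • z i
  set A := fun n => ∑ i ∈ Finset.range n, |c i|
  have h0 : (0 : X) ∈ S := hb.zero_mem ⟨z 0, hz 0⟩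
  have ht : ∀ n, t n ∈ Submodule.span ℝ S := fun n =>
    Submodule.sum_mem _ fun i _ => Submodule.smul_mem _ _ (Submodule.subset_span (hz i))
  have hgauge : ∀ m n, gauge S (t m - t n) ≤ dist (A m) (A n) := by
    intro m n
    wlog hnm : n ≤ m generalizing m n
    · rw [← neg_sub, gauge_neg (fun _ => hb.neg_mem_iff.2), dist_comm]
      exact this n m (le_of_not_ge hnm)
    have hA : 0 ≤ ∑ i ∈ Finset.Ico n m, |c i| := Finset.sum_nonneg fun i _ => abs_nonneg _
    have htmn : t m - t n = ∑ i ∈ Finset.Ico n m, c i • z i := (Finset.sum_Ico_eq_sub _ hnm).symm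
    have hAmn : A m - A n = ∑ i ∈ Finset.Ico n m, |c i| := (Finset.sum_Ico_eq_sub _ hnm).symm
    rw [Real.dist_eq, htmn, hAmn, abs_of_nonneg hA]
    exact gauge_le_of_mem hA (sum_smul_mem_sum_abs_smul hb hc h0 _ c fun i _ => hz i)
  obtain ⟨l, hl, hlim⟩ := hX S hcl hS hb hc t ht fun ε hε => by
    obtain ⟨N, hN⟩ := Metric.cauchySeq_iff.1 hsum.hasSum.tendsto_sum_nat.cauchySeq ε hε
    exact ⟨N, fun m hm n hn => (hgauge m n).trans_lt (hN m hm n hn)⟩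
  exact ⟨l, tendsto_sub_nhds_zero_iff.1 <|
    tendsto_nhds_zero_of_tendsto_gauge hS hb hc h0 (fun n => sub_mem (ht n) hl) hlim⟩

theorem Submodule.exists_linearMap_prod_mem_of_linearIndependent {K V W : Type*} [Field K]
    [AddCommGroup V] [Module K V] [AddCommGroup W] [Module K W] (G : Submodule K (V × W))
    (hG : ∀ a, ∃ b, (a, b) ∈ G) {ι : Type*} {v : ι → V} (hv : LinearIndependent K v)
    (w : ι → W) (hvw : ∀ i, (v i, w i) ∈ G) :
    ∃ f : V →ₗ[K] W, (∀ a, (a, f a) ∈ G) ∧ ∀ i, f (v i) = w i := by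
  classical
  choose g hg using hG
  let F : V → W := fun a => if h : ∃ i, v i = a then w h.choose else g a
  have hF : ∀ a, (a, F a) ∈ G := fun a => by
    by_cases h : ∃ i, v i = a
    · simpa only [F, dif_pos h, h.choose_spec] using hvw h.choose
    · simpa only [F, dif_neg h] using hg a
  have hv' : LinearIndepOn K id (range v) := (linearIndepOn_id_range_iff hv.injective).2 hv
  let b := Module.Basis.extend hv'
  let f := b.constr K fun j => F j
  have hb : ∀ j, b j = j := Module.Basis.extend_apply_self hv'
  have hfb : ∀ j, f (b j) = F j := b.constr_basis K _
  refine ⟨f, fun a => ?_, fun i => ?_⟩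
  · have : Submodule.span K (range b) ≤ G.comap (LinearMap.id.prod f) :=
      Submodule.span_le.2 <| by
        rintro _ ⟨j, rfl⟩
        show (b j, f (b j)) ∈ G
        rw [hfb, hb]
        exact hF j
    exact this (b.span_eq ▸ Submodule.mem_top)
  · have hmem : v i ∈ hv'.extend (subset_univ _) := hv'.subset_extend _ ⟨i, rfl⟩
    have hex : ∃ i', v i' = v i := ⟨i, rfl⟩
    have := hfb ⟨v i, hmem⟩
    rw [hb] at this
    simp only [this, F, dif_pos hex, hv.injective hex.choose_spec]

theorem exists_linearMap_tendsto_of_linearIndependent {𝕜 E X ι κ : Type*} [Field 𝕜]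
    [AddCommGroup E] [Module 𝕜 E] [AddCommGroup X] [Module 𝕜 X] [TopologicalSpace X]
    [ContinuousAdd X] [ContinuousConstSMul 𝕜 X] {l : Filter ι} (s : E →ₗ[𝕜] ι → X)
    (hs : ∀ a, ∃ y, Tendsto (s a) l (𝓝 y)) {v : κ → E} (hv : LinearIndependent 𝕜 v)
    (y : κ → X) (hvy : ∀ k, Tendsto (s (v k)) l (𝓝 (y k))) :
    ∃ f : E →ₗ[𝕜] X, (∀ a, Tendsto (s a) l (𝓝 (f a))) ∧ ∀ k, f (v k) = y k :=
  Submodule.exists_linearMap_prod_mem_of_linearIndependent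
    { carrier := {p | Tendsto (s p.1) l (𝓝 p.2)}
      add_mem' := fun {p q} hp hq => by
        show Tendsto (s (p + q).1) l (𝓝 (p + q).2)
        rw [Prod.fst_add, Prod.snd_add, map_add]
        exact hp.add hq
      zero_mem' := by
        show Tendsto (s (0 : E × X).1) l (𝓝 (0 : E × X).2)
        rw [Prod.fst_zero, Prod.snd_zero, map_zero]
        exact tendsto_const_nhds
      smul_mem' := fun c p hp => by
        show Tendsto (s (c • p).1) l (𝓝 (c • p).2)
        rw [Prod.smul_fst, Prod.smul_snd, map_smul]
        exact hp.const_smul c }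
    hs hv y hvy

namespace ellOne

theorem hasSum_abs (α : ellOne) : HasSum (fun i => |α i|) ‖α‖ := by
  simpa using lp.hasSum_norm (p := 1) (by norm_num) α

theorem sum_range_abs_le (α : ellOne) (n : ℕ) : ∑ i ∈ Finset.range n, |α i| ≤ ‖α‖ :=
  sum_le_hasSum _ (fun _ _ => abs_nonneg _) (hasSum_abs α)

theorem coe_stdBasis (n : ℕ) : ⇑(stdBasis n) = Pi.single n 1 :=
  lp.coeFn_single 1 n 1

theorem linearIndependent_stdBasis : LinearIndependent ℝ stdBasis := by
  let coe : ellOne →ₗ[ℝ] ℕ → ℝ :=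
    { toFun := fun α => α, map_add' := lp.coeFn_add, map_smul' := lp.coeFn_smul }
  refine LinearIndependent.of_comp coe ?_
  convert Pi.linearIndependent_single_one ℕ ℝ with n
  exact coe_stdBasis n

variable {X : Type*} [AddCommGroup X] [Module ℝ X]

def partialSums (x : ℕ → X) : ellOne →ₗ[ℝ] ℕ → X where
  toFun α n := ∑ i ∈ Finset.range n, α i • x i
  map_add' α β := by
    ext n
    simp [add_smul, Finset.sum_add_distrib]
  map_smul' c α := by
    ext n
    simp [Finset.smul_sum, smul_smul]

@[simp]
theorem partialSums_apply (x : ℕ → X) (α : ellOne) (n : ℕ) :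
    partialSums x α n = ∑ i ∈ Finset.range n, α i • x i :=
  rfl

theorem partialSums_stdBasis (x : ℕ → X) {n m : ℕ} (h : n < m) :
    partialSums x (stdBasis n) m = x n := by
  rw [partialSums_apply, coe_stdBasis, Finset.sum_eq_single n (fun _ _ hi => by simp [hi])
    (fun hn => absurd (Finset.mem_range.2 h) hn)]
  simp

end ellOne

section Embedding

variable {X : Type*} [AddCommGroup X] [Module ℝ X] [TopologicalSpace X] {S : Set X} {x : ℕ → X}

open ellOne

theorem LocallyComplete.exists_linearMap_tendsto_partialSums [IsTopologicalAddGroup X]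
    [ContinuousSMul ℝ X] (hX : LocallyComplete X) (hcl : IsClosed S) (hS : IsVonNBounded ℝ S)
    (hb : Balanced ℝ S) (hc : Convex ℝ S) (hx : ∀ i, x i ∈ S) :
    ∃ ψ : ellOne →ₗ[ℝ] X,
      (∀ α, Tendsto (partialSums x α) atTop (𝓝 (ψ α))) ∧ ∀ n, ψ (stdBasis n) = x n :=
  exists_linearMap_tendsto_of_linearIndependent (partialSums x)
    (fun α => hX.exists_tendsto_sum_smul hcl hS hb hc hx (hasSum_abs α).summable)
    linearIndependent_stdBasis x fun n =>
      tendsto_const_nhds.congr' <| eventually_atTop.2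
        ⟨n + 1, fun _ hm => (partialSums_stdBasis x hm).symm⟩

-- Only `r > ‖α‖`: without `T1Space X` the set `0 • S = {0}` need not be closed.
theorem mem_smul_of_tendsto_partialSums [ContinuousConstSMul ℝ X] (hcl : IsClosed S)
    (hb : Balanced ℝ S) (hc : Convex ℝ S) (hx : ∀ i, x i ∈ S) {α : ellOne} {y : X}
    (h : Tendsto (partialSums x α) atTop (𝓝 y)) {r : ℝ} (hr : ‖α‖ < r) : y ∈ r • S := by
  have hr0 : 0 < r := (norm_nonneg α).trans_lt hr
  refine (hcl.smul_of_ne_zero hr0.ne').mem_of_tendsto h (Eventually.of_forall fun n => ?_)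
  rw [partialSums_apply]
  refine hb.smul_mono ?_ (sum_smul_mem_sum_abs_smul hb hc (hb.zero_mem ⟨_, hx 0⟩) _ _
    fun i _ => hx i)
  rw [Real.norm_of_nonneg (Finset.sum_nonneg fun _ _ => abs_nonneg _), Real.norm_of_nonneg hr0.le]
  exact (sum_range_abs_le α n).trans hr.le

theorem mul_norm_le_of_tendsto_partialSums {ρ : Seminorm ℝ X} (hρ : Continuous ρ) {δ : ℝ}
    (hl1 : ∀ (n : ℕ) (c : ℕ → ℝ),
      δ * ∑ i ∈ Finset.range n, |c i| ≤ ρ (∑ i ∈ Finset.range n, c i • x i))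
    {α : ellOne} {y : X} (h : Tendsto (partialSums x α) atTop (𝓝 y)) : δ * ‖α‖ ≤ ρ y :=
  le_of_tendsto_of_tendsto' ((hasSum_abs α).tendsto_sum_nat.const_mul δ)
    ((hρ.tendsto y).comp h) fun n => hl1 n α

theorem LinearMap.continuous_of_forall_mem_smul {E : Type*} [SeminormedAddCommGroup E]
    [Module ℝ E] [IsTopologicalAddGroup X] (f : E →ₗ[ℝ] X) (hS : IsVonNBounded ℝ S)
    (hf : ∀ a r, ‖a‖ < r → f a ∈ r • S) : Continuous f := by
  refine continuous_of_continuousAt_zero f ?_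
  rw [ContinuousAt, map_zero]
  intro U hU
  obtain ⟨ε, hε, hεU⟩ := hS.exists_pos_smul_subset hU
  rw [mem_map]
  exact mem_of_superset (Metric.ball_mem_nhds 0 hε) fun a ha =>
    hεU (hf a ε (mem_ball_zero_iff.1 ha))

theorem ContinuousLinearMap.isEmbedding_of_mul_norm_le {E : Type*} [NormedAddCommGroup E]
    [Module ℝ E] [IsTopologicalAddGroup X] (f : E →L[ℝ] X) {ρ : Seminorm ℝ X}
    (hρ : Continuous ρ) {δ : ℝ} (hδ : 0 < δ) (h : ∀ a, δ * ‖a‖ ≤ ρ (f a)) : IsEmbedding f := by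
  refine ⟨IsTopologicalAddGroup.isInducing_iff_nhds_zero.2 (le_antisymm ?_ ?_), fun a b hab => ?_⟩
  · simpa using (f.continuous.tendsto 0).le_comap
  · refine Metric.nhds_basis_ball.ge_iff.2 fun ε hε => mem_comap.2
      ⟨{y | ρ y < δ * ε}, (isOpen_lt hρ continuous_const).mem_nhds (by simpa using mul_pos hδ hε),
        fun a ha => mem_ball_zero_iff.2 ?_⟩
    exact lt_of_mul_lt_mul_left ((h a).trans_lt ha) hδ.le
  · have hab' := h (a - b)
    rw [map_sub, hab, sub_self, map_zero, ← mul_zero δ] at hab'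
    exact sub_eq_zero.1 (norm_le_zero_iff.1 (le_of_mul_le_mul_left hab' hδ))

end Embedding

/-- In a locally complete real locally convex space, every bounded
`l¹`-sequence `(xₙ)` (witnessed by a continuous seminorm `ρ` and `δ > 0`) spans a copy
of `l¹`: there is a continuous linear topological embedding `φ : l¹ → X` with
`φ(eₙ) = xₙ` and `ρ(φ(α)) ≥ δ·‖α‖₁` for all `α ∈ l¹`. -/
theorem l1_sequence_spans_l1_of_locallyComplete
    {X : Type*} [AddCommGroup X] [Module ℝ X] [TopologicalSpace X]
    [IsTopologicalAddGroup X] [ContinuousSMul ℝ X] [LocallyConvexSpace ℝ X]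
    (hX : LocallyComplete X)
    (x : ℕ → X) (hbd : Bornology.IsVonNBounded ℝ (Set.range x))
    (ρ : Seminorm ℝ X) (hρ : Continuous ρ) (δ : ℝ) (hδ : 0 < δ)
    (hl1 : ∀ (n : ℕ) (c : ℕ → ℝ),
      δ * ∑ i ∈ Finset.range n, |c i| ≤ ρ (∑ i ∈ Finset.range n, c i • x i)) :
    ∃ φ : ellOne →L[ℝ] X, IsEmbedding φ ∧ (∀ n : ℕ, φ (stdBasis n) = x n) ∧
      ∀ α : ellOne, δ * ‖α‖ ≤ ρ (φ α) := by
  set S := closedAbsConvexHull ℝ (range x)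
  have hcl : IsClosed S := isClosed_closedAbsConvexHull
  have hS : IsVonNBounded ℝ S := hbd.closedAbsConvexHull
  have habs : AbsConvex ℝ S := absConvex_convexClosedHull
  have hx : ∀ n, x n ∈ S := fun n => subset_closedAbsConvexHull ⟨n, rfl⟩
  obtain ⟨ψ, hψ, hψ_basis⟩ :=
    hX.exists_linearMap_tendsto_partialSums hcl hS habs.1 habs.2 hx
  have hψ_lower (α : ellOne) : δ * ‖α‖ ≤ ρ (ψ α) :=
    mul_norm_le_of_tendsto_partialSums hρ hl1 (hψ α)
  let φ : ellOne →L[ℝ] X := ⟨ψ, ψ.continuous_of_forall_mem_smul hS fun α _ hr =>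
    mem_smul_of_tendsto_partialSums hcl habs.1 habs.2 hx (hψ α) hr⟩
  exact ⟨φ, φ.isEmbedding_of_mul_norm_le hρ hδ hψ_lower, hψ_basis, hψ_lower⟩
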